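/- arXiv:math/0605389 — 2 statements merged into one kernel-verified Lean document; each statement's English description precedes it below -/
import Mathlib

section
/- The map ψ : (ℝ × ℝ^3) × (ℝ × ℝ^3) → ℝ^2 defined by ψ((α, u_0), (α', u_0')) = (‖u_0 × u_0'‖², ‖α' u_0 - α u_0'‖²) is a submersion at every point of ψ⁻¹({(1,1)}); hence ψ⁻¹({(1,1)}) is a smooth submanifold of ℝ^8 of dimension 6. -/
/-- Cross product of two vectors of `EuclideanSpace ℝ (Fin 3)`. -/
noncomputable def cross3 (u v : EuclideanSpace ℝ (Fin 3)) : EuclideanSpace ℝ (Fin 3) :=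
  (WithLp.equiv 2 (Fin 3 → ℝ)).symm
    ![u 1 * v 2 - u 2 * v 1, u 2 * v 0 - u 0 * v 2, u 0 * v 1 - u 1 * v 0]

/-- The map `ψ((α,u₀),(α',u₀')) = (‖u₀ × u₀'‖², ‖α'u₀ - αu₀'‖²)`. -/
noncomputable def ψ :
    (ℝ × EuclideanSpace ℝ (Fin 3)) × (ℝ × EuclideanSpace ℝ (Fin 3)) → ℝ × ℝ :=
  fun p => (‖cross3 p.1.2 p.2.2‖ ^ 2, ‖p.2.1 • p.1.2 - p.1.1 • p.2.2‖ ^ 2)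

lemma cross3_smul_smul (a b : ℝ) (u v : EuclideanSpace ℝ (Fin 3)) :
    cross3 (a • u) (b • v) = (a * b) • cross3 u v := by
  ext i
  simp only [cross3, WithLp.equiv_symm_apply, PiLp.toLp_apply, PiLp.smul_apply, smul_eq_mul]
  fin_cases i <;> simp <;> ring

lemma norm_sq_eq3 (x : EuclideanSpace ℝ (Fin 3)) : ‖x‖ ^ 2 = ∑ i, x i ^ 2 := by
  rw [EuclideanSpace.norm_eq, Real.sq_sqrt (by positivity)]
  simp [sq_abs]

lemma norm_smul_sq (c : ℝ) (x : EuclideanSpace ℝ (Fin 3)) :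
    ‖c • x‖ ^ 2 = c ^ 2 * ‖x‖ ^ 2 := by
  rw [norm_smul, mul_pow, Real.norm_eq_abs, sq_abs]

lemma psi_smooth : ContDiff ℝ (⊤ : ℕ∞) ψ := by
  have h : ∀ i : Fin 3, ContDiff ℝ (⊤ : ℕ∞) (fun x : EuclideanSpace ℝ (Fin 3) => x i) :=
    fun i => (EuclideanSpace.proj i : EuclideanSpace ℝ (Fin 3) →L[ℝ] ℝ).contDiff
  have c1 : ∀ i : Fin 3,
      ContDiff ℝ (⊤ : ℕ∞) (fun p : (ℝ × EuclideanSpace ℝ (Fin 3)) × (ℝ × EuclideanSpace ℝ (Fin 3)) =>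
        p.1.2 i) := fun i => (h i).comp contDiff_fst.snd
  have c2 : ∀ i : Fin 3,
      ContDiff ℝ (⊤ : ℕ∞) (fun p : (ℝ × EuclideanSpace ℝ (Fin 3)) × (ℝ × EuclideanSpace ℝ (Fin 3)) =>
        p.2.2 i) := fun i => (h i).comp contDiff_snd.snd
  have a1 : ContDiff ℝ (⊤ : ℕ∞)
      (fun p : (ℝ × EuclideanSpace ℝ (Fin 3)) × (ℝ × EuclideanSpace ℝ (Fin 3)) => p.1.1) :=
    contDiff_fst.fst
  have a2 : ContDiff ℝ (⊤ : ℕ∞)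
      (fun p : (ℝ × EuclideanSpace ℝ (Fin 3)) × (ℝ × EuclideanSpace ℝ (Fin 3)) => p.2.1) :=
    contDiff_snd.fst
  unfold ψ cross3
  simp only [norm_sq_eq3, Fin.sum_univ_three, WithLp.equiv_symm_apply, PiLp.toLp_apply,
    Matrix.cons_val_zero, Matrix.cons_val_one, Matrix.head_cons, Matrix.cons_val_two,
    Matrix.tail_cons, PiLp.sub_apply, PiLp.smul_apply, smul_eq_mul]
  refine ContDiff.prodMk ?_ ?_
  · exact (((((c1 1).mul (c2 2)).sub ((c1 2).mul (c2 1))).pow 2).add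
      ((((c1 2).mul (c2 0)).sub ((c1 0).mul (c2 2))).pow 2)).add
      ((((c1 0).mul (c2 1)).sub ((c1 1).mul (c2 0))).pow 2)
  · exact ((((a2.mul (c1 0)).sub (a1.mul (c2 0))).pow 2).add
      (((a2.mul (c1 1)).sub (a1.mul (c2 1))).pow 2)).add
      (((a2.mul (c1 2)).sub (a1.mul (c2 2))).pow 2)

theorem psi_submersion :
    ContDiff ℝ (⊤ : ℕ∞) ψ ∧
    ∀ p, ψ p = (1, 1) → Function.Surjective (fderiv ℝ ψ p) := by
  refine ⟨psi_smooth, ?_⟩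
  rintro ⟨⟨α, u⟩, ⟨α', u'⟩⟩ hp
  set p : (ℝ × EuclideanSpace ℝ (Fin 3)) × (ℝ × EuclideanSpace ℝ (Fin 3)) :=
    ((α, u), (α', u')) with hpdef
  have h1 : ‖cross3 u u'‖ ^ 2 = 1 := congrArg Prod.fst hp
  have h2 : ‖α' • u - α • u'‖ ^ 2 = 1 := congrArg Prod.snd hp
  have hdiff : HasFDerivAt ψ (fderiv ℝ ψ p) p :=
    ((psi_smooth.differentiable (by simp)) p).hasFDerivAt
  set L := fderiv ℝ ψ p with hL
  -- direction 1
  set v₁ : (ℝ × EuclideanSpace ℝ (Fin 3)) × (ℝ × EuclideanSpace ℝ (Fin 3)) :=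
    ((0, u), (0, u')) with hv₁
  have hline₁ : HasDerivAt (fun t : ℝ => p + t • v₁) v₁ 0 := by
    simpa using ((hasDerivAt_id (0 : ℝ)).smul_const v₁).const_add p
  have hd1 : HasFDerivAt ψ L (p + (0 : ℝ) • v₁) := by simpa using hdiff
  have hc1 : HasDerivAt (fun t : ℝ => ψ (p + t • v₁)) (L v₁) 0 :=
    hd1.comp_hasDerivAt (f := fun t : ℝ => p + t • v₁) 0 hline₁
  have e1 : (fun t : ℝ => ψ (p + t • v₁)) = fun t : ℝ => ((1 + t) ^ 4, (1 + t) ^ 2) := by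
    funext t
    have hpt : p + t • v₁ = ((α, (1 + t) • u), (α', (1 + t) • u')) := by
      simp only [hpdef, hv₁, Prod.mk_add_mk, Prod.smul_mk, smul_zero, add_zero]
      simp [add_smul]
    rw [hpt]
    show (‖cross3 ((1 + t) • u) ((1 + t) • u')‖ ^ 2,
        ‖α' • ((1 + t) • u) - α • ((1 + t) • u')‖ ^ 2) = _
    rw [cross3_smul_smul]
    have : α' • ((1 + t) • u) - α • ((1 + t) • u') = (1 + t) • (α' • u - α • u') := by
      rw [smul_sub, smul_comm α' (1 + t) u, smul_comm α (1 + t) u']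
    rw [this, norm_smul_sq, norm_smul_sq, h1, h2]
    simp only [Prod.mk.injEq]
    constructor <;> ring
  rw [e1] at hc1
  have hk1 : HasDerivAt (fun t : ℝ => (((1 + t) ^ 4 : ℝ), ((1 + t) ^ 2 : ℝ)))
      ((4 : ℝ), (2 : ℝ)) 0 := by
    have hid : HasDerivAt (fun t : ℝ => 1 + t) 1 0 := (hasDerivAt_id 0).const_add 1
    have h4 := hid.pow 4
    have h2' := hid.pow 2
    norm_num at h4 h2'
    exact h4.prodMk h2'
  have hLv₁ : L v₁ = (4, 2) := hc1.unique hk1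
  -- direction 2
  set v₂ : (ℝ × EuclideanSpace ℝ (Fin 3)) × (ℝ × EuclideanSpace ℝ (Fin 3)) :=
    ((α, 0), (α', 0)) with hv₂
  have hline₂ : HasDerivAt (fun t : ℝ => p + t • v₂) v₂ 0 := by
    simpa using ((hasDerivAt_id (0 : ℝ)).smul_const v₂).const_add p
  have hd2 : HasFDerivAt ψ L (p + (0 : ℝ) • v₂) := by simpa using hdiff
  have hc2 : HasDerivAt (fun t : ℝ => ψ (p + t • v₂)) (L v₂) 0 :=
    hd2.comp_hasDerivAt (f := fun t : ℝ => p + t • v₂) 0 hline₂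
  have e2 : (fun t : ℝ => ψ (p + t • v₂)) = fun t : ℝ => ((1 : ℝ), (1 + t) ^ 2) := by
    funext t
    have hpt : p + t • v₂ = (((1 + t) * α, u), ((1 + t) * α', u')) := by
      simp only [hpdef, hv₂, Prod.mk_add_mk, Prod.smul_mk, smul_zero, add_zero,
        smul_eq_mul]
      simp only [Prod.mk.injEq]
      refine ⟨⟨by ring, trivial⟩, by ring, trivial⟩
    rw [hpt]
    show (‖cross3 u u'‖ ^ 2, ‖((1 + t) * α') • u - ((1 + t) * α) • u'‖ ^ 2) = _
    have : ((1 + t) * α') • u - ((1 + t) * α) • u' = (1 + t) • (α' • u - α • u') := by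
      rw [smul_sub, mul_smul, mul_smul]
    rw [this, norm_smul_sq, h1, h2, mul_one]
  rw [e2] at hc2
  have hk2 : HasDerivAt (fun t : ℝ => ((1 : ℝ), ((1 + t) ^ 2 : ℝ))) ((0 : ℝ), (2 : ℝ)) 0 := by
    have hid : HasDerivAt (fun t : ℝ => 1 + t) 1 0 := (hasDerivAt_id 0).const_add 1
    have h2' := hid.pow 2
    norm_num at h2'
    exact (hasDerivAt_const 0 (1 : ℝ)).prodMk h2'
  have hLv₂ : L v₂ = (0, 2) := hc2.unique hk2
  -- surjectivity
  rintro ⟨z1, z2⟩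
  refine ⟨(z1 / 4) • v₁ + (z2 / 2 - z1 / 4) • v₂, ?_⟩
  rw [map_add, map_smul, map_smul, hLv₁, hLv₂]
  simp only [Prod.smul_mk, Prod.mk_add_mk, smul_eq_mul, Prod.mk.injEq]
  constructor <;> ring
end

section
/- The set L of points [η_0 : ... : η_5] ∈ ℙ^5(ℝ) satisfying η_0 η_5 - η_1 η_4 + η_2 η_3 = 0 and η_0^4 + η_1^4 + η_2^4 = η_3^4 + η_4^4 + η_5^4 = 1 (after normalization), identified with the set of pairs (u, v) ∈ ℝ^3 × ℝ^3 with ⟨u,v⟩ = 0, u ≠ 0, v ≠ 0, and η_0^4+η_1^4+η_2^4 = η_5^4+η_4^4+η_3^4, modulo simultaneous sign change (u,v) ↦ (-u,-v), is homeomorphic to SO(3)/{I, σ} where σ = diag(-1,-1,1), via (u,v) ↦ the class of the orthonormal frame (u/‖u‖, v/‖v‖, (u/‖u‖)×(v/‖v‖)). -/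
/-!
The frame map `(u, v) ↦ (û, v̂, û × v̂)` is a homeomorphism from the locus onto `SO(3)`: its
inverse rescales the first two columns of a rotation onto the quartic sphere `q4 = 1`, which every
ray from the origin meets exactly once, and the third column of a rotation is forced to be the
cross product of the first two. Since `(-u) × (-v) = u × v`, the sign change `(u, v) ↦ (-u, -v)`
corresponds to right multiplication by `σ`, so the homeomorphism descends to the quotients.
-/

open InnerProductSpace

/-- The quartic normalization `u ↦ u₁⁴ + u₂⁴ + u₃⁴`. -/
noncomputable def q4 (u : EuclideanSpace ℝ (Fin 3)) : ℝ := u 0 ^ 4 + u 1 ^ 4 + u 2 ^ 4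

/-- The real locus: pairs `(u,v)` of orthogonal vectors of `ℝ³` with
`q4 u = q4 v = 1` (normalized Plücker coordinates satisfying the relation). -/
abbrev LocusL : Type :=
  {p : EuclideanSpace ℝ (Fin 3) × EuclideanSpace ℝ (Fin 3) //
    ⟪p.1, p.2⟫_ℝ = 0 ∧ p.1 ≠ 0 ∧ p.2 ≠ 0 ∧ q4 p.1 = 1 ∧ q4 p.2 = 1}

/-- Simultaneous sign change on the locus. -/
def relL (p q : LocusL) : Prop := q.1 = p.1 ∨ q.1 = (-p.1.1, -p.1.2)

/-- `SO(3)` as a subtype of matrices. -/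
abbrev SO3 : Type := {M : Matrix (Fin 3) (Fin 3) ℝ // M.transpose * M = 1 ∧ M.det = 1}

/-- The matrix `σ = diag(-1,-1,1)`. -/
def σmat : Matrix (Fin 3) (Fin 3) ℝ := Matrix.diagonal ![-1, -1, 1]

/-- The relation identifying `M` with `M * σ` in `SO(3)`. -/
def relSO3 (M N : SO3) : Prop := (N : Matrix (Fin 3) (Fin 3) ℝ) = M ∨
  (N : Matrix (Fin 3) (Fin 3) ℝ) = (M : Matrix (Fin 3) (Fin 3) ℝ) * σmat

/-- The orthonormal frame `(u/‖u‖, v/‖v‖, (u/‖u‖)×(v/‖v‖))` as a matrix (columns). -/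
noncomputable def frameMatrix (p : LocusL) : Matrix (Fin 3) (Fin 3) ℝ :=
  Matrix.of fun i j =>
    (![‖p.1.1‖⁻¹ • p.1.1, ‖p.1.2‖⁻¹ • p.1.2,
        cross3 (‖p.1.1‖⁻¹ • p.1.1) (‖p.1.2‖⁻¹ • p.1.2)] j) i

local notation "ℝ³" => EuclideanSpace ℝ (Fin 3)

lemma real_inner_fin_three (u v : ℝ³) : ⟪u, v⟫_ℝ = u 0 * v 0 + u 1 * v 1 + u 2 * v 2 := by
  simp [PiLp.inner_apply, Fin.sum_univ_three]; ring

lemma norm_sq_fin_three (u : ℝ³) : ‖u‖ ^ 2 = u 0 ^ 2 + u 1 ^ 2 + u 2 ^ 2 := by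
  rw [← real_inner_self_eq_norm_sq, real_inner_fin_three]; ring

lemma cross3_neg_neg (a b : ℝ³) : cross3 (-a) (-b) = cross3 a b := by
  ext i; fin_cases i <;> simp [cross3]

lemma inner_self_cross3 (a b : ℝ³) : ⟪a, cross3 a b⟫_ℝ = 0 := by
  simp only [real_inner_fin_three, cross3]; simp; ring

lemma inner_cross3_self (a b : ℝ³) : ⟪b, cross3 a b⟫_ℝ = 0 := by
  simp only [real_inner_fin_three, cross3]; simp; ring

lemma norm_cross3_sq (a b : ℝ³) : ‖cross3 a b‖ ^ 2 = ‖a‖ ^ 2 * ‖b‖ ^ 2 - ⟪a, b⟫_ℝ ^ 2 := by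
  simp only [norm_sq_fin_three, real_inner_fin_three, cross3]; simp; ring

def ofCols (v : Fin 3 → ℝ³) : Matrix (Fin 3) (Fin 3) ℝ := Matrix.of fun i j => v j i

noncomputable def col (M : Matrix (Fin 3) (Fin 3) ℝ) (j : Fin 3) : ℝ³ :=
  WithLp.toLp 2 fun i => M i j

@[simp] lemma col_apply (M : Matrix (Fin 3) (Fin 3) ℝ) (j i : Fin 3) : col M j i = M i j := rfl

@[simp] lemma col_ofCols (v : Fin 3 → ℝ³) (j : Fin 3) : col (ofCols v) j = v j := rfl

lemma ofCols_col (M : Matrix (Fin 3) (Fin 3) ℝ) : ofCols (col M) = M := rfl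

lemma transpose_mul_self_apply (M : Matrix (Fin 3) (Fin 3) ℝ) (i j : Fin 3) :
    (M.transpose * M) i j = ⟪col M i, col M j⟫_ℝ := by
  simp [Matrix.mul_apply, Fin.sum_univ_three, real_inner_fin_three]

lemma det_ofCols_cross3 (a b : ℝ³) : (ofCols ![a, b, cross3 a b]).det = ‖cross3 a b‖ ^ 2 := by
  rw [Matrix.det_fin_three, norm_sq_fin_three]; simp [ofCols, cross3]; ring

lemma ofCols_cross3_mem_SO3 {a b : ℝ³} (ha : ‖a‖ = 1) (hb : ‖b‖ = 1) (hab : ⟪a, b⟫_ℝ = 0) :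
    (ofCols ![a, b, cross3 a b]).transpose * ofCols ![a, b, cross3 a b] = 1 ∧
      (ofCols ![a, b, cross3 a b]).det = 1 := by
  have hc : ‖cross3 a b‖ ^ 2 = 1 := by rw [norm_cross3_sq, ha, hb, hab]; norm_num
  refine ⟨?_, by rw [det_ofCols_cross3, hc]⟩
  ext i j
  rw [transpose_mul_self_apply]
  fin_cases i <;> fin_cases j <;>
    simp [ha, hb, hc, hab, real_inner_comm a b, real_inner_comm a (cross3 a b),
      real_inner_comm b (cross3 a b), inner_self_cross3, inner_cross3_self]

section orthogonal

variable {M : Matrix (Fin 3) (Fin 3) ℝ}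

lemma inner_col_col_of_transpose_mul_self (hM : M.transpose * M = 1) (i j : Fin 3) :
    ⟪col M i, col M j⟫_ℝ = (1 : Matrix (Fin 3) (Fin 3) ℝ) i j := by
  rw [← transpose_mul_self_apply, hM]

lemma norm_col_of_transpose_mul_self (hM : M.transpose * M = 1) (j : Fin 3) : ‖col M j‖ = 1 := by
  have h := inner_col_col_of_transpose_mul_self hM j j
  rw [real_inner_self_eq_norm_sq, Matrix.one_apply_eq] at h
  exact (pow_eq_one_iff_of_nonneg (norm_nonneg _) two_ne_zero).1 h

/-- For `M ∈ SO(3)` the adjugate is `Mᵀ`, and the last row of the adjugate is the cross product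
of the first two columns. -/
lemma col_two_eq_cross3 (hM : M.transpose * M = 1) (hdet : M.det = 1) :
    col M 2 = cross3 (col M 0) (col M 1) := by
  have hadj : M.adjugate = M.transpose := by
    calc M.adjugate = M.transpose * M * M.adjugate := by rw [hM, Matrix.one_mul]
      _ = M.transpose := by rw [Matrix.mul_assoc, Matrix.mul_adjugate, hdet, one_smul,
        Matrix.mul_one]
  rw [Matrix.adjugate_fin_three] at hadj
  ext i
  have h := congrFun (congrFun hadj.symm 2) i
  fin_cases i <;> (simp [cross3] at h ⊢; linarith)

lemma eq_ofCols_cross3 (hM : M.transpose * M = 1) (hdet : M.det = 1) :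
    M = ofCols ![col M 0, col M 1, cross3 (col M 0) (col M 1)] := by
  rw [← col_two_eq_cross3 hM hdet]
  ext i j; fin_cases j <;> rfl

end orthogonal

lemma ofCols_mul_σmat (v : Fin 3 → ℝ³) : ofCols v * σmat = ofCols ![-v 0, -v 1, v 2] := by
  ext i j
  fin_cases j <;> simp [σmat, ofCols, Matrix.mul_diagonal]

lemma inv_norm_smul_smul_of_pos {E : Type*} [NormedAddCommGroup E] [NormedSpace ℝ E] {c : ℝ}
    (hc : 0 < c) (w : E) :
    ‖c • w‖⁻¹ • (c • w) = ‖w‖⁻¹ • w := by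
  rw [norm_smul, Real.norm_of_nonneg hc.le, smul_smul, mul_inv, mul_right_comm,
    inv_mul_cancel₀ hc.ne', one_mul]

lemma q4_smul (c : ℝ) (w : ℝ³) : q4 (c • w) = c ^ 4 * q4 w := by
  simp only [q4, PiLp.smul_apply, smul_eq_mul]; ring

lemma q4_neg (w : ℝ³) : q4 (-w) = q4 w := by
  rw [← neg_one_smul ℝ w, q4_smul]; norm_num

lemma q4_nonneg (w : ℝ³) : 0 ≤ q4 w := by
  unfold q4; positivity

@[simp] lemma q4_zero : q4 0 = 0 := by simp [q4]

lemma q4_pos {w : ℝ³} (hw : w ≠ 0) : 0 < q4 w := by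
  refine (q4_nonneg w).lt_of_ne' fun h => hw ?_
  obtain ⟨h01, h2⟩ := (add_eq_zero_iff_of_nonneg (by positivity) (by positivity)).1 h
  obtain ⟨h0, h1⟩ := (add_eq_zero_iff_of_nonneg (by positivity) (by positivity)).1 h01
  simp only [pow_eq_zero_iff four_ne_zero] at h0 h1 h2
  ext i; fin_cases i <;> simp [h0, h1, h2]

noncomputable def q4Normalize (w : ℝ³) : ℝ³ := q4 w ^ (-(1 / 4) : ℝ) • w

lemma q4_q4Normalize {w : ℝ³} (hw : w ≠ 0) : q4 (q4Normalize w) = 1 := by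
  rw [q4Normalize, q4_smul, ← Real.rpow_natCast, ← Real.rpow_mul (q4_nonneg w)]
  norm_num [Real.rpow_neg_one, inv_mul_cancel₀ (q4_pos hw).ne']

lemma q4Normalize_ne_zero {w : ℝ³} (hw : w ≠ 0) : q4Normalize w ≠ 0 := fun h => by
  simpa [h] using q4_q4Normalize hw

lemma q4Normalize_of_q4_eq_one {w : ℝ³} (hw : q4 w = 1) : q4Normalize w = w := by
  rw [q4Normalize, hw, Real.one_rpow, one_smul]

lemma q4Normalize_smul_of_pos {c : ℝ} (hc : 0 < c) (w : ℝ³) :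
    q4Normalize (c • w) = q4Normalize w := by
  rw [q4Normalize, q4Normalize, q4_smul, Real.mul_rpow (by positivity) (q4_nonneg w),
    ← Real.rpow_natCast, ← Real.rpow_mul hc.le, smul_smul]
  norm_num [Real.rpow_neg_one, mul_right_comm _ _ c, inv_mul_cancel₀ hc.ne']

lemma q4Normalize_neg (w : ℝ³) : q4Normalize (-w) = -q4Normalize w := by
  rw [q4Normalize, q4Normalize, q4_neg, smul_neg]

lemma inner_q4Normalize_eq_zero {v w : ℝ³} (h : ⟪v, w⟫_ℝ = 0) :
    ⟪q4Normalize v, q4Normalize w⟫_ℝ = 0 := by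
  rw [q4Normalize, q4Normalize, real_inner_smul_left, real_inner_smul_right, h, mul_zero, mul_zero]

section continuity

variable {X : Type*} [TopologicalSpace X]

@[fun_prop]
lemma Continuous.cross3 {a b : X → ℝ³} (ha : Continuous a) (hb : Continuous b) :
    Continuous fun x => _root_.cross3 (a x) (b x) := by
  simp only [_root_.cross3, WithLp.equiv_symm_apply]; fun_prop

@[fun_prop]
lemma continuous_ofCols : Continuous ofCols := by unfold ofCols; fun_prop

@[fun_prop]
lemma continuous_col (j : Fin 3) : Continuous fun M : Matrix (Fin 3) (Fin 3) ℝ => col M j := by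
  unfold col; fun_prop

@[fun_prop]
lemma continuous_q4 : Continuous q4 := by unfold q4; fun_prop

lemma Continuous.q4Normalize {f : X → ℝ³} (hf : Continuous f) (h0 : ∀ x, f x ≠ 0) :
    Continuous fun x => _root_.q4Normalize (f x) :=
  ((continuous_q4.comp hf).rpow_const fun x => Or.inl (q4_pos (h0 x)).ne').smul hf

lemma Continuous.inv_norm_smul {E : Type*} [NormedAddCommGroup E] [NormedSpace ℝ E] {f : X → E}
    (hf : Continuous f) (h0 : ∀ x, f x ≠ 0) : Continuous fun x => ‖f x‖⁻¹ • f x :=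
  (hf.norm.inv₀ fun x => norm_ne_zero_iff.2 (h0 x)).smul hf

end continuity

lemma frameMatrix_eq_ofCols (p : LocusL) : frameMatrix p = ofCols ![‖p.1.1‖⁻¹ • p.1.1,
    ‖p.1.2‖⁻¹ • p.1.2, cross3 (‖p.1.1‖⁻¹ • p.1.1) (‖p.1.2‖⁻¹ • p.1.2)] := rfl

lemma frameMatrix_mem_SO3 (p : LocusL) :
    (frameMatrix p).transpose * frameMatrix p = 1 ∧ (frameMatrix p).det = 1 := by
  obtain ⟨huv, hu, hv, -⟩ := p.2
  refine ofCols_cross3_mem_SO3 (norm_smul_inv_norm hu) (norm_smul_inv_norm hv) ?_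
  rw [real_inner_smul_left, real_inner_smul_right, huv, mul_zero, mul_zero]

noncomputable def frameSO3 (p : LocusL) : SO3 := ⟨frameMatrix p, frameMatrix_mem_SO3 p⟩

lemma col_ne_zero_of_mem_SO3 (M : SO3) (j : Fin 3) : col M.1 j ≠ 0 := by
  rw [← norm_ne_zero_iff, norm_col_of_transpose_mul_self M.2.1]; exact one_ne_zero

noncomputable def locusOfSO3 (M : SO3) : LocusL :=
  ⟨(q4Normalize (col M.1 0), q4Normalize (col M.1 1)),
    inner_q4Normalize_eq_zero (by
      rw [inner_col_col_of_transpose_mul_self M.2.1]; rfl),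
    q4Normalize_ne_zero (col_ne_zero_of_mem_SO3 M 0),
    q4Normalize_ne_zero (col_ne_zero_of_mem_SO3 M 1),
    q4_q4Normalize (col_ne_zero_of_mem_SO3 M 0),
    q4_q4Normalize (col_ne_zero_of_mem_SO3 M 1)⟩

lemma inv_norm_smul_q4Normalize {w : ℝ³} (hw : ‖w‖ = 1) :
    ‖q4Normalize w‖⁻¹ • q4Normalize w = w := by
  have hw0 : w ≠ 0 := norm_ne_zero_iff.1 (by rw [hw]; exact one_ne_zero)
  rw [q4Normalize, inv_norm_smul_smul_of_pos (Real.rpow_pos_of_pos (q4_pos hw0) _), hw, inv_one,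
    one_smul]

lemma q4Normalize_inv_norm_smul {w : ℝ³} (hw : w ≠ 0) (hq : q4 w = 1) :
    q4Normalize (‖w‖⁻¹ • w) = w := by
  rw [q4Normalize_smul_of_pos (inv_pos.2 (norm_pos_iff.2 hw)), q4Normalize_of_q4_eq_one hq]

lemma locusOfSO3_frameSO3 (p : LocusL) : locusOfSO3 (frameSO3 p) = p := by
  obtain ⟨-, hu, hv, hqu, hqv⟩ := p.2
  exact Subtype.ext (Prod.ext (q4Normalize_inv_norm_smul hu hqu) (q4Normalize_inv_norm_smul hv hqv))

lemma frameSO3_locusOfSO3 (M : SO3) : frameSO3 (locusOfSO3 M) = M := by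
  refine Subtype.ext ?_
  change frameMatrix (locusOfSO3 M) = M.1
  dsimp only [frameMatrix_eq_ofCols, locusOfSO3]
  rw [inv_norm_smul_q4Normalize (norm_col_of_transpose_mul_self M.2.1 0),
    inv_norm_smul_q4Normalize (norm_col_of_transpose_mul_self M.2.1 1),
    ← eq_ofCols_cross3 M.2.1 M.2.2]

noncomputable def locusHomeoSO3 : LocusL ≃ₜ SO3 where
  toFun := frameSO3
  invFun := locusOfSO3
  left_inv := locusOfSO3_frameSO3
  right_inv := frameSO3_locusOfSO3
  continuous_toFun := by
    have hu : Continuous fun p : LocusL => ‖p.1.1‖⁻¹ • p.1.1 :=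
      (by fun_prop : Continuous fun p : LocusL => p.1.1).inv_norm_smul fun p => p.2.2.1
    have hv : Continuous fun p : LocusL => ‖p.1.2‖⁻¹ • p.1.2 :=
      (by fun_prop : Continuous fun p : LocusL => p.1.2).inv_norm_smul fun p => p.2.2.2.1
    have hframe : Continuous fun p : LocusL => frameMatrix p := by
      simp only [frameMatrix_eq_ofCols]; fun_prop
    exact hframe.subtype_mk _
  continuous_invFun :=
    Continuous.subtype_mk
      (((continuous_col 0).comp continuous_subtype_val).q4Normalize (col_ne_zero_of_mem_SO3 · 0)
        |>.prodMk (((continuous_col 1).comp continuous_subtype_val).q4Normalize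
          (col_ne_zero_of_mem_SO3 · 1))) _

lemma frameMatrix_of_neg {p q : LocusL} (h : q.1 = -p.1) :
    frameMatrix q = frameMatrix p * σmat := by
  obtain ⟨hu, hv⟩ := Prod.ext_iff.1 h
  rw [frameMatrix_eq_ofCols, frameMatrix_eq_ofCols, ofCols_mul_σmat, hu, hv, Prod.fst_neg,
    Prod.snd_neg, norm_neg, norm_neg, smul_neg, smul_neg, cross3_neg_neg]
  rfl

lemma locusOfSO3_of_mul_σmat {M N : SO3} (h : N.1 = M.1 * σmat) :
    (locusOfSO3 N).1 = -(locusOfSO3 M).1 := by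
  have hcol : col N.1 = ![-col M.1 0, -col M.1 1, col M.1 2] := by
    rw [h, ← ofCols_col M.1, ofCols_mul_σmat]; rfl
  change (q4Normalize (col N.1 0), q4Normalize (col N.1 1)) = _
  rw [hcol]
  exact Prod.ext (q4Normalize_neg _) (q4Normalize_neg _)

lemma relL_iff_relSO3 (p q : LocusL) : relL p q ↔ relSO3 (locusHomeoSO3 p) (locusHomeoSO3 q) := by
  constructor
  · rintro (h | h)
    · exact Or.inl (by rw [Subtype.ext h])
    · exact Or.inr (frameMatrix_of_neg h)
  · rintro (h | h)
    · exact Or.inl (congrArg Subtype.val (locusHomeoSO3.injective (Subtype.ext h)))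
    · have h' := locusOfSO3_of_mul_σmat (M := frameSO3 p) (N := frameSO3 q) h
      rw [locusOfSO3_frameSO3, locusOfSO3_frameSO3] at h'
      exact Or.inr h'

theorem locus_homeo_SO3_mod_Z2 :
    ∃ h : Quot relL ≃ₜ Quot relSO3,
      ∀ (p : LocusL) (M : SO3), (M : Matrix (Fin 3) (Fin 3) ℝ) = frameMatrix p →
        h (Quot.mk relL p) = Quot.mk relSO3 M := by
  refine ⟨Homeomorph.Quot.congr locusHomeoSO3 relL_iff_relSO3, fun p M hM => ?_⟩
  obtain rfl : M = frameSO3 p := Subtype.ext hM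
  rfl
end
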